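/- Let φ: 𝔼_2 → 𝔼_2 be a continuous sequential endomorphism with φ(I) = I. Then φ maps invertible effects to invertible effects: for every A ∈ 𝔼_2 with A invertible, φ(A) is invertible. -/

import Mathlib

open Matrix ComplexOrder

/-- A 2×2 effect: positive semidefinite and below the identity in the Loewner order. -/
def IsEffect2 (A : Matrix (Fin 2) (Fin 2) ℂ) : Prop :=
  A.PosSemidef ∧ (1 - A).PosSemidef

/-- The square root of a positive semidefinite matrix, as `Matrix.PosSemidef.sqrt` was defined
in the older Mathlib (it has since been removed). -/
noncomputable def Matrix.PosSemidef.sqrt {n 𝕜 : Type*} [Fintype n] [DecidableEq n] [RCLike 𝕜]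
    {A : Matrix n n 𝕜} (hA : A.PosSemidef) : Matrix n n 𝕜 :=
  hA.1.eigenvectorUnitary.1 * diagonal ((↑) ∘ (√·) ∘ hA.1.eigenvalues) *
  (star hA.1.eigenvectorUnitary : Matrix n n 𝕜)

lemma Matrix.PosSemidef.sqrt_mul_self {A : Matrix (Fin 2) (Fin 2) ℂ} (hA : A.PosSemidef) :
    hA.sqrt * hA.sqrt = A := by
  have hspec := hA.1.spectral_theorem
  rw [Unitary.conjStarAlgAut_apply] at hspec
  have hU2 : (star (hA.1.eigenvectorUnitary : Matrix (Fin 2) (Fin 2) ℂ)) *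
      (hA.1.eigenvectorUnitary : Matrix (Fin 2) (Fin 2) ℂ) = 1 :=
    Matrix.mem_unitaryGroup_iff'.mp hA.1.eigenvectorUnitary.2
  unfold Matrix.PosSemidef.sqrt
  conv_rhs => rw [hspec]
  simp only [Unitary.coe_star, mul_assoc]
  rw [← mul_assoc (star _) (hA.1.eigenvectorUnitary : Matrix (Fin 2) (Fin 2) ℂ), hU2, one_mul,
    ← mul_assoc (diagonal _), diagonal_mul_diagonal]
  congr 3
  funext i
  simp only [Function.comp_apply]
  rw [← map_mul]
  congr 1
  exact Real.mul_self_sqrt (hA.eigenvalues_nonneg i)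

lemma psd_coe_smul_one {t : ℝ} (h0 : 0 ≤ t) :
    (((t : ℂ) • 1 : Matrix (Fin 2) (Fin 2) ℂ)).PosSemidef := by
  rw [Matrix.smul_one_eq_diagonal]
  exact Matrix.PosSemidef.diagonal fun i => show (0:ℂ) ≤ (t:ℂ) by exact_mod_cast h0

lemma effect_smul_one {t : ℝ} (h0 : 0 ≤ t) (h1 : t ≤ 1) :
    IsEffect2 ((t : ℂ) • 1) := by
  refine ⟨psd_coe_smul_one h0, ?_⟩
  have : (1 : Matrix (Fin 2) (Fin 2) ℂ) - (t:ℂ) • 1 = ((1 - t : ℝ) : ℂ) • 1 := by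
    push_cast
    rw [sub_smul, one_smul]
  rw [this]
  exact psd_coe_smul_one (by linarith)

lemma sqrt_smul_one {t : ℝ} (h0 : 0 ≤ t)
    (h : (((t:ℂ) • 1 : Matrix (Fin 2) (Fin 2) ℂ)).PosSemidef) :
    h.sqrt = ((Real.sqrt t : ℝ) : ℂ) • 1 := by
  have hspec := h.1.spectral_theorem
  rw [Unitary.conjStarAlgAut_apply] at hspec
  set U : Matrix (Fin 2) (Fin 2) ℂ := (h.1.eigenvectorUnitary : Matrix (Fin 2) (Fin 2) ℂ)
    with hUdef
  have hU2 : star U * U = 1 := Matrix.mem_unitaryGroup_iff'.mp h.1.eigenvectorUnitary.2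
  have hU1 : U * star U = 1 := Matrix.mem_unitaryGroup_iff.mp h.1.eigenvectorUnitary.2
  have hd : diagonal (RCLike.ofReal ∘ h.1.eigenvalues) = (t:ℂ) • (1 : Matrix (Fin 2) (Fin 2) ℂ) := by
    calc diagonal (RCLike.ofReal ∘ h.1.eigenvalues)
        = (star U * U) * diagonal (RCLike.ofReal ∘ h.1.eigenvalues) * (star U * U) := by
          rw [hU2, one_mul, mul_one]
      _ = star U * (U * diagonal (RCLike.ofReal ∘ h.1.eigenvalues) * star U) * U := by
          simp only [mul_assoc]
      _ = star U * ((t:ℂ) • 1) * U := by rw [← hspec]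
      _ = (t:ℂ) • 1 := by rw [mul_smul_comm, mul_one, smul_mul_assoc, hU2]
  have hev : ∀ i, h.1.eigenvalues i = t := by
    intro i
    have := congrFun (congrFun hd i) i
    simpa [Matrix.smul_apply] using this
  have hdiag : diagonal (RCLike.ofReal ∘ (fun x => √x) ∘ h.1.eigenvalues)
      = ((Real.sqrt t : ℝ) : ℂ) • (1 : Matrix (Fin 2) (Fin 2) ℂ) := by
    rw [Matrix.smul_one_eq_diagonal (((Real.sqrt t : ℝ) : ℂ))]
    congr 1
    funext i
    simp [hev]
  unfold Matrix.PosSemidef.sqrt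
  rw [hdiag, mul_smul_comm, mul_one, smul_mul_assoc]
  exact congrArg _ hU1

/-- A continuous unital sequential endomorphism of 𝔼₂ maps invertible effects to
invertible effects. -/
theorem sequential_endo_preserves_invertibility
    (φ : Matrix (Fin 2) (Fin 2) ℂ → Matrix (Fin 2) (Fin 2) ℂ)
    (hmaps : ∀ A : Matrix (Fin 2) (Fin 2) ℂ, IsEffect2 A → IsEffect2 (φ A))
    (hcont : ContinuousOn φ {A : Matrix (Fin 2) (Fin 2) ℂ | IsEffect2 A})
    (hseq : ∀ (A B : Matrix (Fin 2) (Fin 2) ℂ) (hA : IsEffect2 A)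
      (hB : IsEffect2 B),
      φ (hA.1.sqrt * B * hA.1.sqrt) =
        (hmaps A hA).1.sqrt * φ B * (hmaps A hA).1.sqrt)
    (hunital : φ 1 = 1) :
    ∀ A : Matrix (Fin 2) (Fin 2) ℂ, IsEffect2 A → IsUnit A → IsUnit (φ A) := by
  -- Step 1: squaring identity for scalar effects
  have key : ∀ t : ℝ, 0 ≤ t → t ≤ 1 →
      φ (((t^2 : ℝ) : ℂ) • 1) = (φ ((t:ℂ) • 1))^2 := by
    intro t h0 h1
    have hEt := effect_smul_one h0 h1
    have h2 := hseq _ _ hEt hEt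
    rw [sqrt_smul_one h0] at h2
    have harg : (((Real.sqrt t : ℝ):ℂ) • 1) * ((t:ℂ) • 1) * (((Real.sqrt t : ℝ):ℂ) • 1)
        = (((t^2 : ℝ):ℂ)) • (1 : Matrix (Fin 2) (Fin 2) ℂ) := by
      rw [smul_mul_smul_comm, smul_mul_smul_comm, one_mul, one_mul]
      congr 1
      push_cast
      rw [mul_comm (Real.sqrt t : ℂ) (t:ℂ), mul_assoc, ← Complex.ofReal_mul,
        Real.mul_self_sqrt h0]
      ring
    rw [harg] at h2
    rw [h2]
    set S := (hmaps _ hEt).1.sqrt with hSdef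
    have hSS : S * S = φ ((t:ℂ) • 1) := (hmaps _ hEt).1.sqrt_mul_self
    rw [← hSS]
    noncomm_ring
  -- Step 2: bounds on iterated square roots
  have hubnd : ∀ (t : ℝ), 0 ≤ t → t ≤ 1 → ∀ n : ℕ,
      0 ≤ Real.sqrt^[n] t ∧ Real.sqrt^[n] t ≤ 1 := by
    intro t h0 h1 n
    induction n with
    | zero => simpa using ⟨h0, h1⟩
    | succ n ih =>
      rw [Function.iterate_succ_apply']
      exact ⟨Real.sqrt_nonneg _, Real.sqrt_le_one.mpr ih.2⟩
  -- Step 3: iterated squaring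
  have gpow : ∀ (t : ℝ), 0 ≤ t → t ≤ 1 → ∀ n : ℕ,
      φ ((t:ℂ) • 1) = (φ (((Real.sqrt^[n] t : ℝ):ℂ) • 1))^(2^n) := by
    intro t h0 h1 n
    induction n with
    | zero => simp
    | succ n ih =>
      obtain ⟨hu0, hu1⟩ := hubnd t h0 h1 n
      have hk := key (Real.sqrt (Real.sqrt^[n] t)) (Real.sqrt_nonneg _)
        (Real.sqrt_le_one.mpr hu1)
      rw [Real.sq_sqrt hu0] at hk
      rw [ih, hk, Function.iterate_succ_apply', ← pow_mul, ← pow_succ']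
  -- Step 4: invertible scalar effects go to invertible matrices
  have gInv : ∀ t : ℝ, 0 < t → t ≤ 1 → IsUnit (φ ((t:ℂ) • 1)) := by
    intro t h0 h1
    have hufla : ∀ n : ℕ, Real.sqrt^[n] t = t ^ ((1/2 : ℝ)^n) := by
      intro n
      induction n with
      | zero => simp
      | succ n ih =>
        rw [Function.iterate_succ_apply', ih, Real.sqrt_eq_rpow,
          ← Real.rpow_mul h0.le, pow_succ]
    have hlim : Filter.Tendsto (fun n => Real.sqrt^[n] t) Filter.atTop (nhds 1) := by
      simp only [hufla]
      have h2 : Filter.Tendsto (fun n : ℕ => (1/2 : ℝ)^n) Filter.atTop (nhds 0) :=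
        tendsto_pow_atTop_nhds_zero_of_lt_one (by norm_num) (by norm_num)
      have hc : ContinuousAt (fun x : ℝ => t ^ x) 0 :=
        Real.continuousAt_const_rpow h0.ne'
      have h3 := hc.tendsto.comp h2
      simpa [Real.rpow_zero, Function.comp_def] using h3
    have hsmul : Continuous (fun r : ℝ => (r:ℂ) • (1 : Matrix (Fin 2) (Fin 2) ℂ)) :=
      (Complex.continuous_ofReal).smul continuous_const
    have hclim : Filter.Tendsto
        (fun n => ((Real.sqrt^[n] t : ℝ):ℂ) • (1 : Matrix (Fin 2) (Fin 2) ℂ))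
        Filter.atTop (nhds 1) := by
      have h4 := (hsmul.tendsto 1).comp hlim
      simpa [Function.comp_def] using h4
    have hmem : ∀ n : ℕ,
        ((Real.sqrt^[n] t : ℝ):ℂ) • (1 : Matrix (Fin 2) (Fin 2) ℂ) ∈ {A | IsEffect2 A} :=
      fun n => effect_smul_one (hubnd t h0.le h1 n).1 (hubnd t h0.le h1 n).2
    have hphilim : Filter.Tendsto (fun n => φ (((Real.sqrt^[n] t : ℝ):ℂ) • 1))
        Filter.atTop (nhds 1) := by
      have h1' : IsEffect2 (1 : Matrix (Fin 2) (Fin 2) ℂ) :=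
        ⟨Matrix.PosSemidef.one, by rw [sub_self]; exact Matrix.PosSemidef.zero⟩
      have hw := hcont 1 h1'
      rw [ContinuousWithinAt] at hw
      have h5 : Filter.Tendsto
          (fun n => ((Real.sqrt^[n] t : ℝ):ℂ) • (1 : Matrix (Fin 2) (Fin 2) ℂ))
          Filter.atTop (nhdsWithin 1 {A | IsEffect2 A}) :=
        tendsto_nhdsWithin_iff.mpr ⟨hclim, Filter.Eventually.of_forall hmem⟩
      have h6 := hw.comp h5
      rwa [hunital] at h6
    have hdet : Filter.Tendsto (fun n => (φ (((Real.sqrt^[n] t : ℝ):ℂ) • 1)).det)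
        Filter.atTop (nhds 1) := by
      have hcdet : Continuous fun M : Matrix (Fin 2) (Fin 2) ℂ => M.det :=
        Continuous.matrix_det continuous_id
      have h7 := (hcdet.tendsto 1).comp hphilim
      simpa [Function.comp_def] using h7
    obtain ⟨n, hn⟩ := (hdet.eventually_ne one_ne_zero).exists
    have h8 : IsUnit (φ (((Real.sqrt^[n] t : ℝ):ℂ) • 1)) :=
      (Matrix.isUnit_iff_isUnit_det _).mpr (isUnit_iff_ne_zero.mpr hn)
    rw [gpow t h0.le h1 n]
    exact h8.pow _
  -- Main argument
  intro A hA hU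
  set ev : Fin 2 → ℝ := hA.1.1.eigenvalues with hevdef
  set U : Matrix (Fin 2) (Fin 2) ℂ :=
    (Matrix.IsHermitian.eigenvectorUnitary hA.1.1 : Matrix (Fin 2) (Fin 2) ℂ) with hUdef
  have hU2 : star U * U = 1 :=
    Matrix.mem_unitaryGroup_iff'.mp (Matrix.IsHermitian.eigenvectorUnitary hA.1.1).2
  have hU1 : U * star U = 1 :=
    Matrix.mem_unitaryGroup_iff.mp (Matrix.IsHermitian.eigenvectorUnitary hA.1.1).2
  have hdetA : A.det ≠ 0 := ((Matrix.isUnit_iff_isUnit_det A).mp hU).ne_zero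
  have hevpos : ∀ i, 0 < ev i := by
    intro i
    refine (hA.1.eigenvalues_nonneg i).lt_of_ne' fun h0 => ?_
    apply hdetA
    rw [hA.1.1.det_eq_prod_eigenvalues]
    exact Finset.prod_eq_zero (Finset.mem_univ i) (Complex.ofReal_eq_zero.mpr h0)
  set t' : ℝ := min (min (ev 0) (ev 1)) 1 with ht'def
  have ht'pos : 0 < t' := lt_min (lt_min (hevpos 0) (hevpos 1)) one_pos
  have ht'le1 : t' ≤ 1 := min_le_right _ _
  have ht'le : ∀ i, t' ≤ ev i := by
    intro i
    fin_cases i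
    · exact le_trans (min_le_left _ _) (min_le_left _ _)
    · exact le_trans (min_le_left _ _) (min_le_right _ _)
  set D2 : Fin 2 → ℂ := fun i => ((t' / ev i : ℝ) : ℂ) with hD2def
  set C : Matrix (Fin 2) (Fin 2) ℂ := U * Matrix.diagonal D2 * star U with hCdef
  have hmul : ∀ d e : Fin 2 → ℂ,
      (U * Matrix.diagonal d * star U) * (U * Matrix.diagonal e * star U)
        = U * Matrix.diagonal (fun i => d i * e i) * star U := by
    intro d e
    simp only [mul_assoc]
    rw [← mul_assoc (star U) U, hU2, one_mul, ← mul_assoc (Matrix.diagonal d),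
      Matrix.diagonal_mul_diagonal]
  have hCpsd : C.PosSemidef := by
    have hd : Matrix.PosSemidef (Matrix.diagonal D2) :=
      Matrix.PosSemidef.diagonal fun i =>
        show (0:ℂ) ≤ ((t' / ev i : ℝ) : ℂ) from by
          exact_mod_cast div_nonneg ht'pos.le (hevpos i).le
    have := hd.mul_mul_conjTranspose_same U
    rwa [← Matrix.star_eq_conjTranspose] at this
  have hC : IsEffect2 C := by
    refine ⟨hCpsd, ?_⟩
    have h1C : (1 : Matrix (Fin 2) (Fin 2) ℂ) - C
        = U * Matrix.diagonal (fun i => ((1 - t' / ev i : ℝ) : ℂ)) * star U := by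
      have he : Matrix.diagonal (fun i : Fin 2 => ((1 - t' / ev i : ℝ) : ℂ))
          = 1 - Matrix.diagonal D2 := by
        rw [← Matrix.diagonal_one, Matrix.diagonal_sub]
        congr 1
        funext i
        simp only [hD2def]
        push_cast
        ring
      rw [he, mul_sub, mul_one, sub_mul, hU1, hCdef]
    rw [h1C]
    have hd : Matrix.PosSemidef (Matrix.diagonal (fun i : Fin 2 => ((1 - t' / ev i : ℝ) : ℂ))) :=
      Matrix.PosSemidef.diagonal fun i =>
        show (0:ℂ) ≤ ((1 - t' / ev i : ℝ) : ℂ) from by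
          have : t' / ev i ≤ 1 := (div_le_one (hevpos i)).mpr (ht'le i)
          exact_mod_cast sub_nonneg.mpr this
    have := hd.mul_mul_conjTranspose_same U
    rwa [← Matrix.star_eq_conjTranspose] at this
  have hsqrtA : hA.1.sqrt = U * Matrix.diagonal ((↑) ∘ Real.sqrt ∘ ev) * star U := rfl
  have harg : hA.1.sqrt * C * hA.1.sqrt = (t' : ℂ) • 1 := by
    rw [hsqrtA, hCdef, hmul, hmul]
    have hdiag : (fun i : Fin 2 => (Complex.ofReal ∘ Real.sqrt ∘ ev) i * D2 i *
        (Complex.ofReal ∘ Real.sqrt ∘ ev) i) = fun _ => (t' : ℂ) := by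
      funext i
      show ((Real.sqrt (ev i) : ℝ):ℂ) * ((t' / ev i : ℝ):ℂ) * ((Real.sqrt (ev i) : ℝ):ℂ)
        = ((t' : ℝ) : ℂ)
      rw [← Complex.ofReal_mul, ← Complex.ofReal_mul]
      congr 1
      calc Real.sqrt (ev i) * (t' / ev i) * Real.sqrt (ev i)
          = (Real.sqrt (ev i) * Real.sqrt (ev i)) * (t' / ev i) := by ring
        _ = ev i * (t' / ev i) := by rw [Real.mul_self_sqrt (hevpos i).le]
        _ = t' := by
              rw [mul_div_assoc', mul_comm, mul_div_assoc, div_self (hevpos i).ne', mul_one]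
    rw [hdiag, ← Matrix.smul_one_eq_diagonal, mul_smul_comm, mul_one, smul_mul_assoc, hU1]
  have h2 := hseq A C hA hC
  rw [harg] at h2
  have hUnit := gInv t' ht'pos ht'le1
  rw [h2] at hUnit
  have hdS : IsUnit ((hmaps A hA).1.sqrt).det := by
    have h3 := (Matrix.isUnit_iff_isUnit_det _).mp hUnit
    rw [Matrix.det_mul, Matrix.det_mul] at h3
    exact isUnit_of_mul_isUnit_left (isUnit_of_mul_isUnit_left h3)
  have hfa : φ A = (hmaps A hA).1.sqrt * (hmaps A hA).1.sqrt :=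
    ((hmaps A hA).1.sqrt_mul_self).symm
  rw [hfa]
  exact (Matrix.isUnit_iff_isUnit_det _).mpr (by rw [Matrix.det_mul]; exact hdS.mul hdS)
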